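/- arXiv:1610.01975 — 2 statements merged into one kernel-verified Lean document; each statement's English description precedes it below -/
import Mathlib

section
/- Let n ≥ 1, let α, β ∈ (0,1), and let γ, ε, c, K be positive reals with 2γ < α·β. For z, w ∈ ℂ^n define the cone distance d_β(z, w) := ( | |z₁|^{β−1}·z₁ − |w₁|^{β−1}·w₁ |² + Σ_{i=2}^n |z_i − w_i|² )^{1/2}, where the map ζ ↦ |ζ|^{β−1}·ζ is extended by 0 at ζ = 0. Let x₀ ∈ ℂ^n with (x₀)₁ = 0, let U be an open neighborhood of x₀, let u : U → ℝ satisfy |u(z) − u(w)| ≤ K · d_β(z, w)^α for all z, w ∈ U, and let W : U → ℝ satisfy W(x₀) = 0 and W(z) ≥ c·|z₁|^{2γ} for all z ∈ U. Then the function u + ε·W does not attain a local maximum at x₀. -/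
/-- The branch-free power map `ζ ↦ |ζ|^(β-1) * ζ`, extended by `0` at `ζ = 0`. -/
noncomputable def conePow (β : ℝ) (ζ : ℂ) : ℂ :=
  if ζ = 0 then 0 else ((‖ζ‖ ^ (β - 1) : ℝ) : ℂ) * ζ

/-- The cone distance `d_β` on `ℂ^n` (with the cone along the first coordinate):
`d_β(z,w) = (| |z₁|^(β-1) z₁ - |w₁|^(β-1) w₁ |² + Σ_{i≥2} |z_i - w_i|²)^(1/2)`. -/
noncomputable def coneDist (β : ℝ) {n : ℕ} [NeZero n] (z w : Fin n → ℂ) : ℝ :=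
  (‖conePow β (z 0) - conePow β (w 0)‖ ^ 2 +
      ∑ i ∈ Finset.univ.erase (0 : Fin n), ‖z i - w i‖ ^ 2) ^ ((1 : ℝ) / 2)

/-!
Move off the divisor along the first coordinate: at `z = x₀ + t·e₁` with `t > 0` one has
`d_β(z, x₀) = t^β`, so the Hölder bound lets `u` drop by at most `K·t^(αβ)`, while the barrier
gains at least `ε·c·t^(2γ)`. Since `2γ < αβ` the gain wins for small `t`, so `u + ε·W` is larger
at `z` than at `x₀`.
-/

open Filter Topology

@[simp]
theorem conePow_zero (β : ℝ) : conePow β 0 = 0 := if_pos rfl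

theorem norm_conePow (β : ℝ) {ζ : ℂ} (hζ : ζ ≠ 0) : ‖conePow β ζ‖ = ‖ζ‖ ^ β := by
  rw [conePow, if_neg hζ, norm_mul, Complex.norm_real, Real.norm_of_nonneg (by positivity),
    ← Real.rpow_add_one (norm_ne_zero_iff.mpr hζ), sub_add_cancel]

theorem coneDist_update_zero_left (β : ℝ) {n : ℕ} [NeZero n] (x : Fin n → ℂ) (ζ : ℂ) :
    coneDist β (Function.update x 0 ζ) x = ‖conePow β ζ - conePow β (x 0)‖ := by
  have hrest : ∑ i ∈ Finset.univ.erase (0 : Fin n), ‖Function.update x 0 ζ i - x i‖ ^ 2 = 0 :=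
    Finset.sum_eq_zero fun i hi => by
      simp [Function.update_of_ne (Finset.ne_of_mem_erase hi)]
  rw [coneDist, hrest, add_zero, Function.update_self, ← Real.sqrt_eq_rpow,
    Real.sqrt_sq (norm_nonneg _)]

theorem eventually_mul_rpow_lt_mul_rpow {p q : ℝ} (hpq : p < q) (K : ℝ) {C : ℝ} (hC : 0 < C) :
    ∀ᶠ t in 𝓝[>] (0 : ℝ), K * t ^ q < C * t ^ p := by
  have hlim : Tendsto (fun t : ℝ => K * t ^ (q - p)) (𝓝[>] 0) (𝓝 0) := by
    have := (Real.continuousAt_rpow_const 0 (q - p) (Or.inr (sub_pos.mpr hpq).le)).tendsto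
    rw [Real.zero_rpow (sub_pos.mpr hpq).ne'] at this
    simpa using (this.const_mul K).mono_left nhdsWithin_le_nhds
  filter_upwards [hlim.eventually (gt_mem_nhds hC), self_mem_nhdsWithin] with t hKt ht
  calc K * t ^ q = K * t ^ (q - p) * t ^ p := by
        rw [mul_assoc, ← Real.rpow_add ht, sub_add_cancel]
    _ < C * t ^ p := by gcongr; exact Real.rpow_pos_of_pos ht p

theorem stmt_2_general (n : ℕ) [NeZero n] (α β γ ε c K : ℝ)
    (hε : 0 < ε) (hc : 0 < c) (hγαβ : 2 * γ < α * β)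
    (x₀ : Fin n → ℂ) (hx₀ : x₀ 0 = 0)
    (U : Set (Fin n → ℂ)) (hU : IsOpen U) (hx₀U : x₀ ∈ U)
    (u W : (Fin n → ℂ) → ℝ)
    (hu : ∀ z ∈ U, ∀ w ∈ U, |u z - u w| ≤ K * coneDist β z w ^ α)
    (hW₀ : W x₀ = 0) (hW : ∀ z ∈ U, c * ‖z 0‖ ^ (2 * γ) ≤ W z) :
    ¬ IsLocalMax (fun z => u z + ε * W z) x₀ := by
  intro hmax
  set z : ℝ → Fin n → ℂ := fun t => Function.update x₀ 0 (t : ℂ)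
  have hz : Tendsto z (𝓝[>] 0) (𝓝 x₀) := by
    have : Continuous z := by fun_prop
    simpa [z, ← hx₀] using this.continuousWithinAt (s := Set.Ioi 0) (x := 0) |>.tendsto
  obtain ⟨t, ⟨hzmax, hzU⟩, hlt, ht⟩ := ((hz.eventually (hmax.and (hU.mem_nhds hx₀U))).and
    ((eventually_mul_rpow_lt_mul_rpow hγαβ K (mul_pos hε hc)).and self_mem_nhdsWithin)).exists
  have hnorm : ‖z t 0‖ = t := by simp [z, abs_of_pos ht]
  have hdist : coneDist β (z t) x₀ ^ α = t ^ (α * β) := by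
    rw [coneDist_update_zero_left, hx₀, conePow_zero, sub_zero,
      norm_conePow β (by exact_mod_cast ht.ne'), Complex.norm_real, Real.norm_of_nonneg ht.le,
      ← Real.rpow_mul ht.le, mul_comm]
  have hgain : ε * (c * t ^ (2 * γ)) ≤ u x₀ - u (z t) := by
    have := hW (z t) hzU
    rw [hnorm] at this
    have : u (z t) + ε * W (z t) ≤ u x₀ + ε * W x₀ := hzmax
    nlinarith
  have hloss : u x₀ - u (z t) ≤ K * t ^ (α * β) := by
    have := hu (z t) hzU x₀ hx₀U
    rw [hdist, abs_sub_comm] at this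
    exact (le_abs_self _).trans this
  linarith

/-- Jeffres' trick, local form: if `u` is `α`-Hölder with respect to the cone distance
`d_β`, `2γ < α·β`, and `W` vanishes at `x₀` (a point of the divisor `{z₁ = 0}`) while
`W(z) ≥ c·|z₁|^(2γ)` nearby, then `u + ε·W` has no local maximum at `x₀`. -/
theorem stmt_2 (n : ℕ) [NeZero n] (α β γ ε c K : ℝ)
    (hα : α ∈ Set.Ioo (0 : ℝ) 1) (hβ : β ∈ Set.Ioo (0 : ℝ) 1)
    (hγ : 0 < γ) (hε : 0 < ε) (hc : 0 < c) (hK : 0 < K) (hγαβ : 2 * γ < α * β)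
    (x₀ : Fin n → ℂ) (hx₀ : x₀ 0 = 0)
    (U : Set (Fin n → ℂ)) (hU : IsOpen U) (hx₀U : x₀ ∈ U)
    (u W : (Fin n → ℂ) → ℝ)
    (hu : ∀ z ∈ U, ∀ w ∈ U, |u z - u w| ≤ K * coneDist β z w ^ α)
    (hW₀ : W x₀ = 0) (hW : ∀ z ∈ U, c * ‖z 0‖ ^ (2 * γ) ≤ W z) :
    ¬ IsLocalMax (fun z => u z + ε * W z) x₀ :=
  stmt_2_general n α β γ ε c K hε hc hγαβ x₀ hx₀ U hU hx₀U u W hu hW₀ hW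
end

section
/- Let k ≥ 1 be a natural number, let p ≥ 1 be a real number, and let R > 0. Define g : ℂ → ℂ by g(z) := |z|^{p−k} · z^k for z ≠ 0 and g(0) := 0 (here |z|^{p−k} is the real power of the modulus). Then there exists a constant C > 0 such that |g(z) − g(w)| ≤ C · |z − w| for all z, w in the closed disk of radius R centered at 0. -/
/-!
Write `z = ‖z‖ • u` with `‖u‖ ≤ 1`, so that `g z = ‖z‖ ^ p • u ^ k`, and split
`g z - g w = (‖z‖ ^ p - ‖w‖ ^ p) • u ^ k + ‖w‖ ^ p • (u ^ k - v ^ k)`.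
Since `p ≥ 1`, `t ↦ t ^ p` is `p R ^ (p - 1)`-Lipschitz on `[0, R]`, which bounds the first term.
For the second, `u ↦ u ^ k` is `k`-Lipschitz on the unit ball and `‖w‖ ‖u - v‖ ≤ 2 ‖z - w‖`,
so `‖w‖ ^ p ‖u ^ k - v ^ k‖ ≤ 2 k ‖w‖ ^ (p - 1) ‖z - w‖`.
-/

open Set NormedSpace

lemma norm_pow_sub_pow_le_of_norm_le_one {A : Type*} [SeminormedRing A] [NormOneClass A]
    {u v : A} (hu : ‖u‖ ≤ 1) (hv : ‖v‖ ≤ 1) (k : ℕ) :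
    ‖u ^ k - v ^ k‖ ≤ k * ‖u - v‖ := by
  induction k with
  | zero => simp
  | succ k ih =>
    have hu_pow : ‖u ^ k‖ ≤ 1 := (norm_pow_le u k).trans (pow_le_one₀ (norm_nonneg u) hu)
    calc ‖u ^ (k + 1) - v ^ (k + 1)‖ = ‖u ^ k * (u - v) + (u ^ k - v ^ k) * v‖ := by
          congr 1; noncomm_ring
      _ ≤ ‖u ^ k‖ * ‖u - v‖ + ‖u ^ k - v ^ k‖ * ‖v‖ :=
          (norm_add_le _ _).trans (add_le_add (norm_mul_le _ _) (norm_mul_le _ _))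
      _ ≤ 1 * ‖u - v‖ + k * ‖u - v‖ * 1 := by gcongr
      _ = (k + 1 : ℕ) * ‖u - v‖ := by push_cast; ring

lemma abs_rpow_sub_rpow_le {p R a b : ℝ} (hp : 1 ≤ p) (ha : a ∈ Icc 0 R) (hb : b ∈ Icc 0 R) :
    |a ^ p - b ^ p| ≤ p * R ^ (p - 1) * |a - b| := by
  refine (convex_Icc 0 R).norm_image_sub_le_of_norm_hasDerivWithin_le
    (f := fun x : ℝ ↦ x ^ p)
    (fun x _ ↦ (Real.hasDerivAt_rpow_const (Or.inr hp)).hasDerivWithinAt) (fun x hx ↦ ?_) hb ha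
  rw [Real.norm_eq_abs, abs_of_nonneg (by have := hx.1; positivity)]
  exact mul_le_mul_of_nonneg_left (Real.rpow_le_rpow hx.1 hx.2 (by linarith)) (by linarith)

section NormedSpace

variable {V : Type*} [NormedAddCommGroup V] [NormedSpace ℝ V]

lemma norm_normalize_le_one (x : V) : ‖normalize x‖ ≤ 1 := by
  by_cases hx : x = 0
  · simp [hx]
  · exact (norm_normalize hx).le

lemma norm_mul_norm_normalize_sub_normalize_le (x y : V) :
    ‖y‖ * ‖normalize x - normalize y‖ ≤ 2 * ‖x - y‖ := by
  calc ‖y‖ * ‖normalize x - normalize y‖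
      = ‖(‖y‖ - ‖x‖) • normalize x + (x - y)‖ := by
        rw [← abs_norm y, ← Real.norm_eq_abs, ← norm_smul, smul_sub, norm_smul_normalize,
          sub_smul, norm_smul_normalize, Real.norm_eq_abs, abs_norm, sub_add_sub_cancel]
    _ ≤ |‖y‖ - ‖x‖| * 1 + ‖x - y‖ := by
        refine (norm_add_le _ _).trans ?_
        rw [norm_smul, Real.norm_eq_abs]
        gcongr
        exact norm_normalize_le_one x
    _ ≤ 2 * ‖x - y‖ := by
        rw [abs_sub_comm]
        linarith [abs_norm_sub_norm_le x y]

end NormedSpace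

lemma norm_rpow_smul_normalize_pow_sub_le {A : Type*} [NormedRing A] [NormedAlgebra ℝ A]
    [NormOneClass A] {p R : ℝ} (hp : 1 ≤ p) (k : ℕ) {x y : A} (hx : ‖x‖ ≤ R) (hy : ‖y‖ ≤ R) :
    ‖‖x‖ ^ p • normalize x ^ k - ‖y‖ ^ p • normalize y ^ k‖
      ≤ (p + 2 * k) * R ^ (p - 1) * ‖x - y‖ := by
  have hR : 0 ≤ R ^ (p - 1) := Real.rpow_nonneg ((norm_nonneg x).trans hx) _
  have radial : ‖(‖x‖ ^ p - ‖y‖ ^ p) • normalize x ^ k‖ ≤ p * R ^ (p - 1) * ‖x - y‖ := by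
    rw [norm_smul, Real.norm_eq_abs]
    calc |‖x‖ ^ p - ‖y‖ ^ p| * ‖normalize x ^ k‖ ≤ p * R ^ (p - 1) * |‖x‖ - ‖y‖| * 1 :=
          mul_le_mul (abs_rpow_sub_rpow_le hp ⟨norm_nonneg x, hx⟩ ⟨norm_nonneg y, hy⟩)
            ((norm_pow_le _ k).trans (pow_le_one₀ (norm_nonneg _) (norm_normalize_le_one x)))
            (norm_nonneg _) (by positivity)
      _ ≤ p * R ^ (p - 1) * ‖x - y‖ := by
          rw [mul_one]
          exact mul_le_mul_of_nonneg_left (abs_norm_sub_norm_le x y) (by positivity)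
  have angular : ‖‖y‖ ^ p • (normalize x ^ k - normalize y ^ k)‖
      ≤ 2 * k * R ^ (p - 1) * ‖x - y‖ := by
    have hy_rpow : ‖y‖ ^ p = ‖y‖ ^ (p - 1) * ‖y‖ := by
      rw [← Real.rpow_add_one' (norm_nonneg y) (by linarith), sub_add_cancel]
    rw [norm_smul, Real.norm_eq_abs, abs_of_nonneg (by positivity)]
    calc ‖y‖ ^ p * ‖normalize x ^ k - normalize y ^ k‖
        ≤ ‖y‖ ^ (p - 1) * ‖y‖ * (k * ‖normalize x - normalize y‖) := by
          rw [hy_rpow]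
          gcongr
          exact norm_pow_sub_pow_le_of_norm_le_one (norm_normalize_le_one x)
            (norm_normalize_le_one y) k
      _ = k * ‖y‖ ^ (p - 1) * (‖y‖ * ‖normalize x - normalize y‖) := by ring
      _ ≤ k * R ^ (p - 1) * (2 * ‖x - y‖) :=
          mul_le_mul (mul_le_mul_of_nonneg_left (Real.rpow_le_rpow (norm_nonneg y) hy
            (by linarith)) k.cast_nonneg) (norm_mul_norm_normalize_sub_normalize_le x y)
            (by positivity) (by positivity)
      _ = 2 * k * R ^ (p - 1) * ‖x - y‖ := by ring
  calc ‖‖x‖ ^ p • normalize x ^ k - ‖y‖ ^ p • normalize y ^ k‖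
      = ‖(‖x‖ ^ p - ‖y‖ ^ p) • normalize x ^ k
          + ‖y‖ ^ p • (normalize x ^ k - normalize y ^ k)‖ := by
        rw [sub_smul, smul_sub, sub_add_sub_cancel]
    _ ≤ p * R ^ (p - 1) * ‖x - y‖ + 2 * k * R ^ (p - 1) * ‖x - y‖ :=
        (norm_add_le _ _).trans (add_le_add radial angular)
    _ = (p + 2 * k) * R ^ (p - 1) * ‖x - y‖ := by ring

lemma ite_rpow_mul_pow_eq_rpow_smul_normalize_pow {p : ℝ} (hp : p ≠ 0) (k : ℕ) (z : ℂ) :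
    (if z = 0 then 0 else ((‖z‖ ^ (p - (k : ℝ)) : ℝ) : ℂ) * z ^ k)
      = ‖z‖ ^ p • NormedSpace.normalize z ^ k := by
  split_ifs with hz
  · simp [hz, Real.zero_rpow hp]
  · have ha : 0 < ‖z‖ := norm_pos_iff.mpr hz
    rw [NormedSpace.normalize, smul_pow, smul_smul, Real.rpow_sub ha, Real.rpow_natCast, inv_pow,
      div_eq_mul_inv, Complex.real_smul]

theorem stmt_7_general (k : ℕ) (p : ℝ) (hp : 1 ≤ p) (R : ℝ) (hR : 0 < R) :
    ∃ C : ℝ, 0 < C ∧ ∀ z ∈ Metric.closedBall (0 : ℂ) R, ∀ w ∈ Metric.closedBall (0 : ℂ) R,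
      ‖(if z = 0 then 0 else ((‖z‖ ^ (p - (k : ℝ)) : ℝ) : ℂ) * z ^ k) -
           (if w = 0 then 0 else ((‖w‖ ^ (p - (k : ℝ)) : ℝ) : ℂ) * w ^ k)‖
        ≤ C * ‖z - w‖ := by
  have hC : 0 < p + 2 * k := by linarith [(k.cast_nonneg : (0 : ℝ) ≤ k)]
  refine ⟨(p + 2 * k) * R ^ (p - 1), mul_pos hC (Real.rpow_pos_of_pos hR _), fun z hz w hw ↦ ?_⟩
  have hp0 : p ≠ 0 := by linarith
  rw [ite_rpow_mul_pow_eq_rpow_smul_normalize_pow hp0,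
    ite_rpow_mul_pow_eq_rpow_smul_normalize_pow hp0]
  exact norm_rpow_smul_normalize_pow_sub_le hp k (mem_closedBall_zero_iff.mp hz)
    (mem_closedBall_zero_iff.mp hw)

/-- For `k ≥ 1`, `p ≥ 1` and `R > 0`, the map `g(z) = |z|^(p-k) * z^k` (with `g 0 = 0`)
is Lipschitz on the closed disk of radius `R`. -/
theorem stmt_7 (k : ℕ) (hk : 1 ≤ k) (p : ℝ) (hp : 1 ≤ p) (R : ℝ) (hR : 0 < R) :
    ∃ C : ℝ, 0 < C ∧ ∀ z ∈ Metric.closedBall (0 : ℂ) R, ∀ w ∈ Metric.closedBall (0 : ℂ) R,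
      ‖(if z = 0 then 0 else ((‖z‖ ^ (p - (k : ℝ)) : ℝ) : ℂ) * z ^ k) -
           (if w = 0 then 0 else ((‖w‖ ^ (p - (k : ℝ)) : ℝ) : ℂ) * w ^ k)‖
        ≤ C * ‖z - w‖ :=
  stmt_7_general k p hp R hR
end
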